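/- Let T = ⋃_{α a countable successor ordinal} ω₁^α, ordered by extension, with path space P(T) ⊆ 2^T. Then: (b) P(T) has no G_δ points; and (c) no point of P(T) \ Σ(T) is the limit of a nontrivial (injective) sequence in P(T). Moreover P(T) does not have the countable chain condition. -/

import Mathlib

open Cardinal Filter Topology

/-- The first uncountable ordinal. -/
noncomputable def omega1 : Ordinal.{0} := (Cardinal.aleph 1).ord

/-- The tree `T = ⋃ {ω₁^α : α a countable successor ordinal}` of transfinite sequences in
`ω₁` of countable successor length, encoded as pairs (length, function), with the
function normalized to `0` outside the domain. -/
def TreeT : Type 1 :=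
  {p : Ordinal.{0} × (Ordinal.{0} → Ordinal.{0}) //
    (∃ β : Ordinal.{0}, p.1 = β + 1) ∧ p.1 < omega1 ∧
    (∀ i, i < p.1 → p.2 i < omega1) ∧ (∀ i, ¬ i < p.1 → p.2 i = 0)}

/-- The tree order on `T`: extension of sequences. -/
def treeLE (s t : TreeT) : Prop := s.1.1 ≤ t.1.1 ∧ ∀ i, i < s.1.1 → s.1.2 i = t.1.2 i

/-- Strict tree order. -/
def treeLT (s t : TreeT) : Prop := treeLE s t ∧ s ≠ t

/-- The path space `P(T) ⊆ 2^T`: characteristic functions of downward closed chains. -/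
def PathSpace : Set (TreeT → Bool) :=
  {ε | (∀ s t, ε s = true → ε t = true → treeLE s t ∨ treeLE t s) ∧
    (∀ t s, ε t = true → treeLT s t → ε s = true)}

/-!
Two distinct paths share only countably many nodes: every common node lies below a node on which
they differ, and a node of countable height has only countably many predecessors. Hence along an
injective sequence of paths converging to `ε`, every node of `ε` eventually lies on two consecutive
paths, so `ε` has countable support.

A `G_δ` set containing a path contains every path agreeing with it on some countable set `S` of
nodes, and every path can be changed away from `S`. If its height is unbounded below `ω₁`, cut it
off above the heights of the nodes of `S`; otherwise it has a supremum height `δ < ω₁`, and the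
path can be completed to a node of length `δ + 1` whose last value avoids the countably many values
taken at `δ` by the nodes of `S`.

The `ℵ₁` nodes of length one are pairwise incomparable, so their cylinders are disjoint.
-/

open scoped Ordinal

lemma omega1_eq_omega_one : omega1 = ω₁ := Cardinal.ord_aleph 1

lemma omega1_pos : 0 < omega1 := omega1_eq_omega_one ▸ (Cardinal.isSuccLimit_omega 1).pos

lemma add_one_lt_omega1 {o : Ordinal.{0}} (h : o < omega1) : o + 1 < omega1 := by
  rw [omega1_eq_omega_one, ← Order.succ_eq_add_one] at *
  exact (Cardinal.isSuccLimit_omega 1).succ_lt h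

lemma Set.Countable.exists_lt_omega1_mem_upperBounds {L : Set Ordinal.{0}} (hL : L.Countable)
    (h : ∀ o ∈ L, o < omega1) : ∃ δ < omega1, δ ∈ upperBounds L := by
  have := hL.to_subtype
  refine ⟨⨆ o : L, (o : Ordinal), ?_,
    fun o ho => Ordinal.le_iSup (fun o : L => (o : Ordinal)) ⟨o, ho⟩⟩
  rw [omega1_eq_omega_one] at h ⊢
  exact Ordinal.iSup_lt_omega_one fun o => h o o.2

lemma not_countable_Iio_omega1 : ¬ (Set.Iio omega1).Countable := fun h => by
  obtain ⟨δ, hδ, hbound⟩ := h.exists_lt_omega1_mem_upperBounds fun _ ho => ho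
  exact (lt_add_one δ).not_ge (hbound (add_one_lt_omega1 hδ))

lemma countable_Iio_of_lt_omega1 {o : Ordinal.{0}} (h : o < omega1) : (Set.Iio o).Countable := by
  rw [← Cardinal.le_aleph0_iff_set_countable, Cardinal.mk_Iio_ordinal, Cardinal.lift_le_aleph0,
    ← Cardinal.lt_aleph_one_iff, ← Cardinal.lt_ord]
  exact h

namespace TreeT

lemma ext_of_length_eq {s t : TreeT} (hlen : s.1.1 = t.1.1)
    (hval : ∀ i < s.1.1, s.1.2 i = t.1.2 i) : s = t := by
  refine Subtype.ext (Prod.ext hlen (funext fun i => ?_))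
  by_cases hi : i < s.1.1
  · exact hval i hi
  · rw [s.2.2.2.2 i hi, t.2.2.2.2 i (hlen ▸ hi)]

noncomputable def ofSucc (β : Ordinal.{0}) (hβ : β < omega1) (f : Ordinal.{0} → Ordinal.{0})
    (hf : ∀ i ≤ β, f i < omega1) : TreeT :=
  ⟨(β + 1, fun i => if i ≤ β then f i else 0), ⟨β, rfl⟩, add_one_lt_omega1 hβ,
    fun i hi => by simpa [Order.lt_add_one_iff.mp hi] using hf i (Order.lt_add_one_iff.mp hi),
    fun i hi => if_neg (mt Order.lt_add_one_iff.mpr hi)⟩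

lemma ofSucc_apply_of_le {β : Ordinal.{0}} {hβ : β < omega1} {f : Ordinal.{0} → Ordinal.{0}}
    {hf : ∀ i ≤ β, f i < omega1} {i : Ordinal.{0}} (hi : i ≤ β) :
    (ofSucc β hβ f hf).1.2 i = f i :=
  if_pos hi

end TreeT

lemma treeLE_refl (s : TreeT) : treeLE s s := ⟨le_rfl, fun _ _ => rfl⟩

lemma treeLE_trans {s t u : TreeT} (hst : treeLE s t) (htu : treeLE t u) : treeLE s u :=
  ⟨hst.1.trans htu.1, fun i hi => (hst.2 i hi).trans (htu.2 i (hi.trans_le hst.1))⟩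

lemma treeLE.eq_of_length_le {s t : TreeT} (h : treeLE s t) (hlen : t.1.1 ≤ s.1.1) : s = t :=
  TreeT.ext_of_length_eq (h.1.antisymm hlen) h.2

lemma treeLE_total_of_treeLE {s t u : TreeT} (hs : treeLE s u) (ht : treeLE t u) :
    treeLE s t ∨ treeLE t s := by
  rcases le_total s.1.1 t.1.1 with h | h
  · exact Or.inl ⟨h, fun i hi => (hs.2 i hi).trans (ht.2 i (hi.trans_le h)).symm⟩
  · exact Or.inr ⟨h, fun i hi => (ht.2 i hi).trans (hs.2 i (hi.trans_le h)).symm⟩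

lemma countable_setOf_treeLE (t : TreeT) : {s | treeLE s t}.Countable := by
  refine Set.MapsTo.countable_of_injOn (f := fun s : TreeT => s.1.1) (t := Set.Iio (t.1.1 + 1))
    (fun s hs => Order.lt_add_one_iff.mpr hs.1) ?_
    (countable_Iio_of_lt_omega1 (add_one_lt_omega1 t.2.2.1))
  intro s hs s' hs' hlen
  rcases treeLE_total_of_treeLE hs hs' with h | h
  · exact h.eq_of_length_le hlen.ge
  · exact (h.eq_of_length_le hlen.le).symm

namespace PathSpace

lemma mem_of_treeLE {ε : TreeT → Bool} (hε : ε ∈ PathSpace) {s t : TreeT} (ht : ε t = true)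
    (hst : treeLE s t) : ε s = true := by
  by_cases h : s = t
  · exact h ▸ ht
  · exact hε.2 t s ht ⟨hst, h⟩

lemma setOf_and_subset_setOf_treeLE {A B : TreeT → Bool} (hA : A ∈ PathSpace)
    (hB : B ∈ PathSpace) {t : TreeT} (hAt : A t = true) (hBt : B t = false) :
    {s | A s = true ∧ B s = true} ⊆ {s | treeLE s t} := by
  rintro s ⟨hAs, hBs⟩
  refine (hA.1 s t hAs hAt).resolve_right fun hts => ?_
  simp [mem_of_treeLE hB hBs hts] at hBt

lemma countable_setOf_and_of_ne {A B : TreeT → Bool} (hA : A ∈ PathSpace) (hB : B ∈ PathSpace)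
    (hAB : A ≠ B) : {s | A s = true ∧ B s = true}.Countable := by
  obtain ⟨t, ht⟩ := Function.ne_iff.mp hAB
  cases hAt : A t <;> cases hBt : B t <;> simp only [hAt, hBt, ne_eq, not_true_eq_false] at ht
  · simp_rw [and_comm (a := A _ = true)]
    exact (countable_setOf_treeLE t).mono (setOf_and_subset_setOf_treeLE hB hA hBt hAt)
  · exact (countable_setOf_treeLE t).mono (setOf_and_subset_setOf_treeLE hA hB hAt hBt)

end PathSpace

open Classical in
noncomputable def downPath (t : TreeT) : TreeT → Bool := fun s => decide (treeLE s t)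

@[simp]
lemma downPath_eq_true {t s : TreeT} : downPath t s = true ↔ treeLE s t := by
  simp [downPath]

lemma downPath_mem (t : TreeT) : downPath t ∈ PathSpace := by
  refine ⟨fun s s' hs hs' => ?_, fun s' s hs' hlt => ?_⟩
  · rw [downPath_eq_true] at hs hs'
    exact treeLE_total_of_treeLE hs hs'
  · rw [downPath_eq_true] at hs' ⊢
    exact treeLE_trans hlt.1 hs'

namespace PathSpace

lemma truncate_mem {x : TreeT → Bool} (hx : x ∈ PathSpace) (δ : Ordinal.{0}) :
    (fun s => x s && decide (s.1.1 ≤ δ)) ∈ PathSpace := by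
  refine ⟨fun s s' hs hs' => ?_, fun s' s hs' hlt => ?_⟩
  · simp only [Bool.and_eq_true] at hs hs'
    exact hx.1 s s' hs.1 hs'.1
  · simp only [Bool.and_eq_true, decide_eq_true_eq] at hs' ⊢
    exact ⟨hx.2 s' s hs'.1 hlt, hlt.1.1.trans hs'.2⟩

lemma exists_branch {x : TreeT → Bool} (hx : x ∈ PathSpace) :
    ∃ F : Ordinal.{0} → Ordinal.{0}, (∀ i, F i < omega1) ∧
      ∀ u, x u = true → ∀ i < u.1.1, u.1.2 i = F i := by
  classical
  refine ⟨fun i => if h : ∃ u, x u = true ∧ i < u.1.1 then h.choose.1.2 i else 0,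
    fun i => ?_, fun u hu i hi => ?_⟩ <;> dsimp only
  · split_ifs with h
    · exact h.choose.2.2.2.1 i h.choose_spec.2
    · exact omega1_pos
  · have h : ∃ u, x u = true ∧ i < u.1.1 := ⟨u, hu, hi⟩
    rw [dif_pos h]
    rcases hx.1 u h.choose hu h.choose_spec.1 with hle | hle
    · exact hle.2 i hi
    · exact (hle.2 i h.choose_spec.2).symm

lemma exists_notMem_forall_iff_treeLT {x : TreeT → Bool} (hx : x ∈ PathSpace)
    {δ₀ : Ordinal.{0}} (hδ₀ : δ₀ < omega1) (hbdd : ∀ s, x s = true → s.1.1 ≤ δ₀)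
    {S : Set TreeT} (hS : S.Countable) : ∃ t ∉ S, ∀ s, x s = true ↔ treeLT s t := by
  obtain ⟨F, hFlt, hF⟩ := exists_branch hx
  set L := (fun s : TreeT => s.1.1) '' {s | x s = true}
  have hδ₀L : δ₀ ∈ upperBounds L := by
    rintro _ ⟨s, hs, rfl⟩
    exact hbdd s hs
  set δ := sSup L
  have hδ : δ < omega1 := (csSup_le' hδ₀L).trans_lt hδ₀
  have hle_δ : ∀ s, x s = true → s.1.1 ≤ δ := fun s hs => le_csSup ⟨δ₀, hδ₀L⟩ ⟨s, hs, rfl⟩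
  obtain ⟨ξ, hξ, hξS⟩ : ∃ ξ < omega1, ξ ∉ (fun s : TreeT => s.1.2 δ) '' S := by
    by_contra! h
    exact not_countable_Iio_omega1 ((hS.image _).mono fun ξ hξ => h ξ hξ)
  set t := TreeT.ofSucc δ hδ (fun i => if i < δ then F i else ξ)
    (fun i _ => by split_ifs; exacts [hFlt i, hξ])
  have htδ : t.1.2 δ = ξ := by rw [TreeT.ofSucc_apply_of_le le_rfl, if_neg (lt_irrefl δ)]
  have hlt_t : ∀ s, x s = true → treeLT s t := by
    intro s hs
    have hlen : s.1.1 < t.1.1 := Order.lt_add_one_iff.mpr (hle_δ s hs)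
    refine ⟨⟨hlen.le, fun i hi => ?_⟩, fun h => hlen.ne (congrArg (·.1.1) h)⟩
    have hiδ : i < δ := hi.trans_le (hle_δ s hs)
    rw [TreeT.ofSucc_apply_of_le hiδ.le, if_pos hiδ, hF s hs i hi]
  refine ⟨t, fun htS => hξS ⟨t, htS, htδ⟩, fun s => ⟨hlt_t s, fun hst => ?_⟩⟩
  obtain ⟨β, hβ⟩ := s.2.1
  have hsδ : s.1.1 ≤ δ := Order.lt_add_one_iff.mp <|
    hst.1.1.lt_of_ne fun h => hst.2 (hst.1.eq_of_length_le h.ge)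
  -- `β < δ = sup`, so some node `u` of `x` is at least as long as `s = β + 1`; both lie below `t`
  obtain ⟨_, ⟨u, hu, rfl⟩, hβu⟩ := exists_lt_of_lt_csSup'
    ((lt_add_one β).trans_le (hβ ▸ hsδ))
  rcases treeLE_total_of_treeLE hst.1 (hlt_t u hu).1 with hsu | hus
  · exact mem_of_treeLE hx hu hsu
  · rwa [← hus.eq_of_length_le (hβ ▸ Order.add_one_le_of_lt hβu)]

lemma exists_ne_eqOn {x : TreeT → Bool} (hx : x ∈ PathSpace) {S : Set TreeT}
    (hS : S.Countable) : ∃ y ∈ PathSpace, y ≠ x ∧ S.EqOn y x := by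
  by_cases hbdd : ∃ δ₀ < omega1, ∀ s, x s = true → s.1.1 ≤ δ₀
  · obtain ⟨δ₀, hδ₀, hbdd⟩ := hbdd
    obtain ⟨t, htS, ht⟩ := exists_notMem_forall_iff_treeLT hx hδ₀ hbdd hS
    refine ⟨downPath t, downPath_mem t, fun h => ?_, fun s hs => ?_⟩
    · have hxt : x t = true := h ▸ downPath_eq_true.mpr (treeLE_refl t)
      exact ((ht t).mp hxt).2 rfl
    · have hst : s ≠ t := ne_of_mem_of_not_mem hs htS
      rw [Bool.eq_iff_iff, downPath_eq_true, ht s]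
      exact ⟨fun h => ⟨h, hst⟩, And.left⟩
  · push Not at hbdd
    obtain ⟨δ, hδ, hδS⟩ := (hS.image fun s : TreeT => s.1.1).exists_lt_omega1_mem_upperBounds
      (by rintro _ ⟨s, -, rfl⟩; exact s.2.2.1)
    obtain ⟨u, hu, hδu⟩ := hbdd δ hδ
    refine ⟨_, truncate_mem hx δ, fun h => ?_, fun s hs => ?_⟩
    · simpa [hu, hδu.not_ge] using congrFun h u
    · simp [hδS ⟨s, hs, rfl⟩]

end PathSpace

section ProductTopology

variable {ι : Type*} {π : ι → Type*} [∀ i, TopologicalSpace (π i)] {X : Set (∀ i, π i)}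

lemma exists_finset_forall_eq_mem_of_isOpen {V : Set X} (hV : IsOpen V) {x : X} (hx : x ∈ V) :
    ∃ I : Finset ι, ∀ y : X, (∀ i ∈ I, (y : ∀ i, π i) i = (x : ∀ i, π i) i) → y ∈ V := by
  obtain ⟨U, hU, rfl⟩ := isOpen_induced_iff.mp hV
  obtain ⟨I, u, hu, hIU⟩ := isOpen_pi_iff.mp hU _ hx
  exact ⟨I, fun y hy => hIU fun i hi => (hy i hi).symm ▸ (hu i hi).2⟩

lemma exists_countable_forall_eq_mem_iInter {V : ℕ → Set X} (hV : ∀ n, IsOpen (V n)) {x : X}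
    (hx : ∀ n, x ∈ V n) : ∃ S : Set ι, S.Countable ∧
      ∀ y : X, (∀ i ∈ S, (y : ∀ i, π i) i = (x : ∀ i, π i) i) → y ∈ ⋂ n, V n := by
  choose I hI using fun n => exists_finset_forall_eq_mem_of_isOpen (hV n) (hx n)
  exact ⟨⋃ n, (I n : Set ι), Set.countable_iUnion fun n => (I n).countable_toSet,
    fun y hy => Set.mem_iInter.mpr fun n => hI n y fun i hi => hy i (Set.mem_iUnion_of_mem n hi)⟩

end ProductTopology

lemma setOf_eq_true_subset_iUnion_of_tendsto {ι : Type*} {g : ℕ → ι → Bool} {x : ι → Bool}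
    (h : Tendsto g atTop (𝓝 x)) :
    {i | x i = true} ⊆ ⋃ n, {i | g n i = true ∧ g (n + 1) i = true} := by
  intro i hi
  have hgi : ∀ᶠ n in atTop, g n i = x i := by
    simpa [nhds_discrete] using tendsto_pi_nhds.mp h i
  obtain ⟨N, hN⟩ := eventually_atTop.mp hgi
  exact Set.mem_iUnion.mpr ⟨N, (hN N le_rfl).trans hi, (hN (N + 1) N.le_succ).trans hi⟩

def cylinder (t : TreeT) : Set PathSpace := {ε | (ε : TreeT → Bool) t = true}

lemma isOpen_cylinder (t : TreeT) : IsOpen (cylinder t) :=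
  (isOpen_discrete {true}).preimage
    ((continuous_apply (A := fun _ => Bool) t).comp continuous_subtype_val)

lemma downPath_mem_cylinder (t : TreeT) : ⟨downPath t, downPath_mem t⟩ ∈ cylinder t :=
  downPath_eq_true.mpr (treeLE_refl t)

lemma cylinder_injective : Function.Injective cylinder := by
  have hsubset : ∀ {s t}, cylinder s ⊆ cylinder t → treeLE t s := fun h =>
    downPath_eq_true.mp (h (downPath_mem_cylinder _))
  intro s t hst
  exact (hsubset hst.ge).eq_of_length_le (hsubset hst.le).1

lemma disjoint_cylinder_of_length_eq {s t : TreeT} (hlen : s.1.1 = t.1.1) (hst : s ≠ t) :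
    Disjoint (cylinder s) (cylinder t) :=
  Set.disjoint_left.mpr fun ε hs ht => hst <| (ε.2.1 s t hs ht).elim
    (fun h => h.eq_of_length_le hlen.ge) fun h => (h.eq_of_length_le hlen.le).symm

lemma Iio_omega1_subset_image_length_eq_one :
    Set.Iio omega1 ⊆ (fun t : TreeT => t.1.2 0) '' {t | t.1.1 = 1} :=
  fun ξ hξ => ⟨TreeT.ofSucc 0 omega1_pos (fun _ => ξ) (fun _ _ => hξ), zero_add 1,
    TreeT.ofSucc_apply_of_le le_rfl⟩

/-- (b) the path space `P(T)` has no `G_δ` points; (c) no point of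
`P(T) \ Σ(T)` (uncountable support) is the limit of an injective sequence in `P(T)`;
moreover `P(T)` fails the countable chain condition. -/
theorem statement19 :
    -- (b) no G_δ points
    (∀ x : ↥PathSpace, ¬ ∃ V : ℕ → Set ↥PathSpace,
      (∀ n, IsOpen (V n)) ∧ (⋂ n, V n) = {x}) ∧
    -- (c) no point of `P(T) \ Σ(T)` is the limit of an injective sequence
    (∀ x : ↥PathSpace, ¬ {t : TreeT | (x : TreeT → Bool) t ≠ false}.Countable →
      ∀ g : ℕ → ↥PathSpace, Function.Injective g → ¬ Tendsto g atTop (𝓝 x)) ∧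
    -- `P(T)` does not have the countable chain condition
    (∃ 𝒰 : Set (Set ↥PathSpace), (∀ W ∈ 𝒰, IsOpen W ∧ W.Nonempty) ∧
      𝒰.Pairwise (Disjoint · ·) ∧ ¬ 𝒰.Countable) := by
  refine ⟨?_, ?_, ?_⟩
  · rintro x ⟨V, hV, hVx⟩
    obtain ⟨S, hS, hSV⟩ := exists_countable_forall_eq_mem_iInter hV
      (Set.mem_iInter.mp (hVx ▸ Set.mem_singleton x))
    obtain ⟨y, hy, hyx, hyS⟩ := PathSpace.exists_ne_eqOn x.2 hS
    have hyV := hSV ⟨y, hy⟩ fun i hi => hyS hi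
    rw [hVx] at hyV
    exact hyx (congrArg Subtype.val hyV)
  · intro x hx g hg hgx
    refine hx ((Set.countable_iUnion fun n => PathSpace.countable_setOf_and_of_ne (g n).2
      (g (n + 1)).2 fun h => n.succ_ne_self (hg (Subtype.ext h)).symm).mono ?_)
    simpa using setOf_eq_true_subset_iUnion_of_tendsto ((continuous_subtype_val.tendsto x).comp hgx)
  · refine ⟨cylinder '' {t | t.1.1 = 1}, ?_, ?_, fun hc => ?_⟩
    · rintro _ ⟨t, -, rfl⟩
      exact ⟨isOpen_cylinder t, _, downPath_mem_cylinder t⟩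
    · rintro _ ⟨s, hs, rfl⟩ _ ⟨t, ht, rfl⟩ hst
      exact disjoint_cylinder_of_length_eq (hs.trans ht.symm) fun h => hst (congrArg cylinder h)
    · have hlevel := Set.countable_of_injective_of_countable_image cylinder_injective.injOn hc
      exact not_countable_Iio_omega1 ((hlevel.image _).mono Iio_omega1_subset_image_length_eq_one)
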